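/- Let p ≥ 3 be a natural number and let T_p be a connected acyclic simple graph in which every vertex has degree exactly p (the p-regular tree). Then the physical Cheeger constant of T_p equals p − 2: the infimum over all finite nonempty vertex sets W of |∂_E W|/|W| is exactly p − 2. -/

import Mathlib

/-- The edge boundary of a vertex set `W`: all edges of `G` with exactly one endpoint in `W`. -/
def edgeBdry {V : Type*} (G : SimpleGraph V) (W : Set V) : Set (Sym2 V) :=
  {e | e ∈ G.edgeSet ∧ ∃ v w : V, e = s(v, w) ∧ v ∈ W ∧ w ∉ W}

/-!
Counting the pairs `(v, w)` of adjacent vertices with `v ∈ W` gives `|∂W| + 2 e(W) = p |W|`,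
where `e(W)` is the number of edges of the subgraph induced on `W`. That subgraph is a forest, so
`e(W) ≤ |W| - 1` and `|∂W| / |W| ≥ p - 2`. Since no vertex is a leaf, paths of every length
exist; on the vertex set of a path the induced subgraph is connected, hence `e(W) ≥ |W| - 1` and
`|∂W| / |W| ≤ p - 2 + 2 / |W|`, which tends to `p - 2`.
-/

open Finset

namespace SimpleGraph

variable {V : Type*} {G : SimpleGraph V}

lemma IsAcyclic.card_edgeSet_add_one_le [Finite V] [Nonempty V] (h : G.IsAcyclic) :
    Nat.card G.edgeSet + 1 ≤ Nat.card V := by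
  -- a forest extends to a spanning tree of the complete graph
  obtain ⟨T, hGT, -, hT⟩ := connected_top.exists_isTree_le_of_le_of_isAcyclic le_top h
  rw [← (isTree_iff_connected_and_card.mp hT).2]
  exact Nat.add_le_add_right (Nat.card_mono (Set.toFinite _) (edgeSet_mono hGT)) 1

lemma IsAcyclic.exists_adj_notMem_support (hG : G.IsAcyclic)
    (hdeg : ∀ v, (G.neighborSet v).Nontrivial) {u v : V} {P : G.Walk u v} (hP : P.IsPath) :
    ∃ w, G.Adj v w ∧ w ∉ P.support := by
  obtain ⟨a, ha, b, hb, hab⟩ := hdeg v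
  by_contra! h
  exact hab <| (hG.eq_penultimate_of_adj_end hP ha (h a ha)).trans
    (hG.eq_penultimate_of_adj_end hP hb (h b hb)).symm

lemma IsAcyclic.exists_isPath_length_eq (hG : G.IsAcyclic)
    (hdeg : ∀ v, (G.neighborSet v).Nontrivial) (u : V) (n : ℕ) :
    ∃ (v : V) (P : G.Walk u v), P.IsPath ∧ P.length = n := by
  induction n with
  | zero => exact ⟨u, .nil, .nil, rfl⟩
  | succ n ih =>
    obtain ⟨v, P, hP, rfl⟩ := ih
    obtain ⟨w, hvw, hw⟩ := hG.exists_adj_notMem_support hdeg hP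
    exact ⟨w, P.concat hvw, hP.concat hw hvw, P.length_concat hvw⟩

lemma IsAcyclic.exists_connected_induce_card_eq [Nonempty V] (hG : G.IsAcyclic)
    (hdeg : ∀ v, (G.neighborSet v).Nontrivial) (n : ℕ) :
    ∃ W : Finset V, #W = n + 1 ∧ (G.induce (W : Set V)).Connected := by
  classical
  obtain ⟨u⟩ := ‹Nonempty V›
  obtain ⟨v, P, hP, hlen⟩ := hG.exists_isPath_length_eq hdeg u n
  refine ⟨P.support.toFinset, ?_, ?_⟩
  · rw [List.toFinset_card_of_nodup hP.support_nodup, P.length_support, hlen]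
  · rw [List.coe_toFinset]
    exact P.connected_induce_support

variable [G.LocallyFinite] [DecidableEq V]

lemma sum_card_neighborFinset_inter (W : Finset V) :
    ∑ v ∈ W, #(G.neighborFinset v ∩ W) = 2 * Nat.card (G.induce (W : Set V)).edgeSet := by
  classical
  rw [Nat.card_eq_fintype_card, card_edgeSet, ← sum_degrees_eq_twice_card_edges,
    ← Finset.sum_coe_sort W]
  refine Fintype.sum_congr _ _ fun v => ?_
  rw [← card_neighborFinset_eq_degree, ← Finset.card_map (.subtype _)]
  congr 1
  ext w
  simp [and_comm]

lemma ncard_edgeBdry_eq_sum (W : Finset V) :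
    (edgeBdry G W).ncard = ∑ v ∈ W, #(G.neighborFinset v \ W) := by
  have hB : edgeBdry G W =
      ((W.sigma fun v => G.neighborFinset v \ W).image fun x => s(x.1, x.2) : Set (Sym2 V)) := by
    ext e
    simp only [edgeBdry, Set.mem_ofPred_eq, coe_image, Set.mem_image, mem_coe, mem_sigma,
      mem_sdiff, mem_neighborFinset, Sigma.exists]
    constructor
    · rintro ⟨he, v, w, rfl, hv, hw⟩
      exact ⟨v, w, ⟨hv, he, hw⟩, rfl⟩
    · rintro ⟨v, w, ⟨hv, hvw, hw⟩, rfl⟩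
      exact ⟨hvw, v, w, rfl, hv, hw⟩
  rw [hB, Set.ncard_coe_finset, card_image_of_injOn, card_sigma]
  rintro ⟨v, w⟩ hvw ⟨v', w'⟩ hvw' h
  simp only [coe_sigma, Set.mem_sigma_iff, mem_coe, mem_sdiff, mem_neighborFinset,
    Sym2.eq, Sym2.rel_iff'] at hvw hvw' h
  obtain ⟨rfl, rfl⟩ | ⟨rfl, rfl⟩ := h
  · rfl
  · exact absurd hvw'.1 hvw.2.2

lemma ncard_edgeBdry_add_two_mul_card_edgeSet_induce (W : Finset V) :
    (edgeBdry G W).ncard + 2 * Nat.card (G.induce (W : Set V)).edgeSet = ∑ v ∈ W, G.degree v := by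
  rw [ncard_edgeBdry_eq_sum, ← sum_card_neighborFinset_inter, ← sum_add_distrib]
  refine sum_congr rfl fun v _ => ?_
  rw [add_comm, card_inter_add_card_sdiff, card_neighborFinset_eq_degree]

lemma IsAcyclic.sub_two_le_div_card {p : ℕ} (hG : G.IsAcyclic) (hp : ∀ v, G.degree v = p)
    {W : Finset V} (hW : W.Nonempty) : (p : ℝ) - 2 ≤ (edgeBdry G W).ncard / #W := by
  have hcount := ncard_edgeBdry_add_two_mul_card_edgeSet_induce (G := G) W
  have : Nonempty (W : Set V) := hW.coe_sort
  have hforest := (hG.induce (W : Set V)).card_edgeSet_add_one_le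
  simp only [hp, sum_const, smul_eq_mul, Nat.card_coe_set_eq, Set.ncard_coe_finset] at hcount hforest
  have hbound : (p * #W + 2 : ℝ) ≤ (edgeBdry G W).ncard + 2 * #W := by exact_mod_cast (by lia)
  rw [le_div_iff₀ (by exact_mod_cast hW.card_pos)]
  linarith

lemma div_card_le_of_connected_induce {p : ℕ} (hp : ∀ v, G.degree v = p)
    {W : Finset V} (hW : (G.induce (W : Set V)).Connected) :
    (edgeBdry G W).ncard / #W ≤ (p : ℝ) - 2 + 2 / #W := by
  have hcount := ncard_edgeBdry_add_two_mul_card_edgeSet_induce (G := G) W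
  have htree := hW.card_vert_le_card_edgeSet_add_one
  simp only [hp, sum_const, smul_eq_mul, Nat.card_coe_set_eq, Set.ncard_coe_finset] at hcount htree
  have hbound : ((edgeBdry G W).ncard + 2 * #W : ℝ) ≤ p * #W + 2 := by exact_mod_cast (by lia)
  have hcard : (0 : ℝ) < #W := by
    obtain ⟨⟨v, hv⟩⟩ := hW.nonempty
    exact_mod_cast card_pos.mpr ⟨v, hv⟩
  rw [div_le_iff₀ hcard, add_mul, div_mul_cancel₀ _ hcard.ne']
  linarith

end SimpleGraph

open SimpleGraph

/-- the `p`-regular tree (`p ≥ 3`), i.e. a connected acyclic `p`-regular simple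
graph, has physical Cheeger constant exactly `p - 2`. -/
theorem physical_cheeger_regular_tree {V : Type*} (G : SimpleGraph V)
    (hconn : G.Connected) (hac : G.IsAcyclic) (p : ℕ) (hp : 3 ≤ p)
    (hreg : ∀ v : V, (G.neighborSet v).ncard = p) :
    sInf {r : ℝ | ∃ W : Finset V, W.Nonempty ∧
        r = ((edgeBdry G (W : Set V)).ncard : ℝ) / (W.card : ℝ)} = (p : ℝ) - 2 := by
  classical
  have : G.LocallyFinite := fun v => (Set.finite_of_ncard_pos (by rw [hreg v]; omega)).fintype
  have hdeg : ∀ v, G.degree v = p := fun v => by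
    rw [← card_neighborSet_eq_degree, ← Nat.card_eq_fintype_card, Nat.card_coe_set_eq, hreg]
  have hnt : ∀ v, (G.neighborSet v).Nontrivial := fun v =>
    Set.one_lt_ncard_iff_nontrivial.mp (by rw [hreg v]; omega)
  have := hconn.nonempty
  refine IsGLB.csInf_eq ⟨?_, fun b hb => ?_⟩ ⟨_, {Classical.arbitrary V}, singleton_nonempty _, rfl⟩
  · rintro _ ⟨W, hW, rfl⟩
    exact hac.sub_two_le_div_card hdeg hW
  · have hlim : Filter.Tendsto (fun n : ℕ => (p : ℝ) - 2 + 2 / ((n : ℝ) + 1))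
        Filter.atTop (nhds ((p : ℝ) - 2)) := by
      simpa [div_eq_mul_inv] using
        (tendsto_one_div_add_atTop_nhds_zero_nat.const_mul (2 : ℝ)).const_add ((p : ℝ) - 2)
    refine ge_of_tendsto' hlim fun n => ?_
    obtain ⟨W, hcard, hW⟩ := hac.exists_connected_induce_card_eq hnt n
    have hW' : W.Nonempty := card_pos.mp (by omega)
    calc b ≤ (edgeBdry G W).ncard / #W := hb ⟨W, hW', rfl⟩
      _ ≤ (p : ℝ) - 2 + 2 / #W := div_card_le_of_connected_induce hdeg hW
      _ = (p : ℝ) - 2 + 2 / ((n : ℝ) + 1) := by rw [hcard, Nat.cast_succ]
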